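/- Let J be an antiunitary involution on a separable Hilbert space H. Then every Hilbert–Schmidt operator T on H⊗H is J-crossable, and the restriction of Cross_J to the Hilbert–Schmidt class is a unitary operator with respect to the Hilbert–Schmidt inner product, i.e., ‖Cross_J(T)‖₂ = ‖T‖₂ for all Hilbert–Schmidt T, and Cross_J is a bijection of the Hilbert–Schmidt class. -/

import Mathlib

noncomputable section
open scoped InnerProductSpace ComplexConjugate

variable {H K : Type*}

/-- A realization of the Hilbert space tensor square of `H` on a Hilbert space `K`. -/
structure TensorSquare (H K : Type*) [NormedAddCommGroup H] [InnerProductSpace ℂ H]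
    [NormedAddCommGroup K] [InnerProductSpace ℂ K] : Type _ where
  tmul : H → H → K
  tmul_add_left : ∀ a a' b, tmul (a + a') b = tmul a b + tmul a' b
  tmul_add_right : ∀ a b b', tmul a (b + b') = tmul a b + tmul a b'
  tmul_smul_left : ∀ (c : ℂ) a b, tmul (c • a) b = c • tmul a b
  tmul_smul_right : ∀ (c : ℂ) a b, tmul a (c • b) = c • tmul a b
  inner_tmul : ∀ a b c d, ⟪tmul a b, tmul c d⟫_ℂ = ⟪a, c⟫_ℂ * ⟪b, d⟫_ℂ
  dense_span : Dense (↑(Submodule.span ℂ (Set.range fun p : H × H => tmul p.1 p.2)) : Set K)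

/-- A densely defined closed antilinear involution `S` on `H`, together with its adjoint `S*`. -/
structure AntiInvolution (H : Type*) [NormedAddCommGroup H] [InnerProductSpace ℂ H] : Type _ where
  dom : Submodule ℂ H
  toFun : H → H
  dense_dom : Dense (dom : Set H)
  map_add : ∀ x ∈ dom, ∀ y ∈ dom, toFun (x + y) = toFun x + toFun y
  map_smul : ∀ (c : ℂ), ∀ x ∈ dom, toFun (c • x) = (starRingEnd ℂ c) • toFun x
  invol_mem : ∀ x ∈ dom, toFun x ∈ dom
  invol : ∀ x ∈ dom, toFun (toFun x) = x
  closed_graph : IsClosed {p : H × H | p.1 ∈ dom ∧ toFun p.1 = p.2}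
  adjDom : Submodule ℂ H
  adjFun : H → H
  dense_adjDom : Dense (adjDom : Set H)
  adj_spec : ∀ y ∈ adjDom, ∀ x ∈ dom, ⟪adjFun y, x⟫_ℂ = ⟪toFun x, y⟫_ℂ
  adj_max : ∀ y z : H, (∀ x ∈ dom, ⟪z, x⟫_ℂ = ⟪toFun x, y⟫_ℂ) → y ∈ adjDom

section
variable [NormedAddCommGroup H] [InnerProductSpace ℂ H]
  [NormedAddCommGroup K] [InnerProductSpace ℂ K]

/-- The crossing relation (unbounded `S`): `Tc = Cross_S(T)`. -/
def CrossRelU (τ : TensorSquare H K) (S : AntiInvolution H) (T Tc : K →L[ℂ] K) : Prop :=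
  ∀ φ₁ ∈ S.dom, ∀ ψ₁ ∈ S.dom, ∀ φ₂ ∈ S.adjDom, ∀ ψ₂ ∈ S.adjDom,
    ⟪τ.tmul φ₁ φ₂, Tc (τ.tmul ψ₁ ψ₂)⟫_ℂ
      = ⟪τ.tmul φ₂ (S.adjFun ψ₂), T (τ.tmul (S.toFun φ₁) ψ₁)⟫_ℂ

/-- The crossing relation for an everywhere defined (bounded) antilinear involution `S`
with adjoint `Sstar`. -/
def CrossRelB (τ : TensorSquare H K) (S Sstar : H →SL[starRingEnd ℂ] H) (T Tc : K →L[ℂ] K) :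
    Prop :=
  ∀ φ₁ φ₂ ψ₁ ψ₂ : H,
    ⟪τ.tmul φ₁ φ₂, Tc (τ.tmul ψ₁ ψ₂)⟫_ℂ = ⟪τ.tmul φ₂ (Sstar ψ₂), T (τ.tmul (S φ₁) ψ₁)⟫_ℂ

end

/-!
Choose a Hilbert basis `(eᵢ)` of `H` made of `J`-fixed vectors: an orthonormal basis of the real
Hilbert space `{x | J x = x}` is orthonormal over `ℂ` (inner products of fixed vectors are real)
and spans `H` over `ℂ`, because `x = ½(x + Jx) + i · (-i/2)(x - Jx)` with both summands fixed.
In the product basis `eᵢ ⊗ eⱼ` of `H ⊗ H` the crossing relation becomes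
`⟪eᵢ ⊗ eⱼ, Tc (eₖ ⊗ eₗ)⟫ = ⟪eⱼ ⊗ eₗ, T (eᵢ ⊗ eₖ)⟫`, i.e. `Cross_J` merely permutes matrix
entries, and by continuity and sesquilinearity this relation on basis vectors is equivalent to
the relation on all elementary tensors. Since the Hilbert–Schmidt norm is the `ℓ²` norm of the
matrix in any Hilbert basis, and every square-summable matrix is the matrix of an operator,
`Cross_J` is everywhere defined, isometric and onto on the Hilbert–Schmidt class.
-/

section HilbertBasis
variable {𝕜 E F ι : Type*} [RCLike 𝕜] [NormedAddCommGroup E] [InnerProductSpace 𝕜 E]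
  [NormedAddCommGroup F] [InnerProductSpace 𝕜 F]

theorem HilbertBasis.apply_mem_of_forall_mem (b : HilbertBasis ι 𝕜 E) (f : E →L[𝕜] F)
    {V : Submodule 𝕜 F} (hV : IsClosed (V : Set F)) (h : ∀ i, f (b i) ∈ V) (x : E) :
    f x ∈ V := by
  have hspan : Submodule.span 𝕜 (Set.range b) ≤ V.comap (f : E →ₗ[𝕜] F) :=
    Submodule.span_le.2 (Set.range_subset_iff.2 h)
  have hclosure := Submodule.topologicalClosure_minimal _ hspan (hV.preimage f.continuous)
  rw [b.dense_span] at hclosure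
  exact hclosure Submodule.mem_top

theorem HilbertBasis.eq_of_semilinear {σ : 𝕜 →+* 𝕜} (b : HilbertBasis ι 𝕜 E) {f g : E → 𝕜}
    (hf : Continuous f) (hg : Continuous g)
    (hf_add : ∀ x y, f (x + y) = f x + f y) (hg_add : ∀ x y, g (x + y) = g x + g y)
    (hf_smul : ∀ (c : 𝕜) x, f (c • x) = σ c * f x) (hg_smul : ∀ (c : 𝕜) x, g (c • x) = σ c * g x)
    (h : ∀ i, f (b i) = g (b i)) (x : E) : f x = g x := by
  have hfg : (⟨⟨⟨f, hf_add⟩, hf_smul⟩, hf⟩ : E →SL[σ] 𝕜) = ⟨⟨⟨g, hg_add⟩, hg_smul⟩, hg⟩ :=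
    ContinuousLinearMap.ext_on (Submodule.dense_iff_topologicalClosure_eq_top.2 b.dense_span)
      (Set.forall_mem_range.2 h)
  exact DFunLike.congr_fun hfg x

theorem HilbertBasis.hasSum_norm_inner_sq (b : HilbertBasis ι 𝕜 E) (x : E) :
    HasSum (fun i => ‖⟪b i, x⟫_𝕜‖ ^ 2) (‖x‖ ^ 2) := by
  have := lp.hasSum_norm (p := 2) (by norm_num) (b.repr x)
  simpa [Real.rpow_two, HilbertBasis.repr_apply_apply] using this

end HilbertBasis

section FixedBasis
universe u
variable {E : Type u} [NormedAddCommGroup E] [InnerProductSpace ℂ E]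

def fixedSubmodule (J : E →SL[starRingEnd ℂ] E) : Submodule ℝ E where
  carrier := {x | J x = x}
  add_mem' {x y} hx hy := by simp_all
  zero_mem' := map_zero J
  smul_mem' c x hx := by
    simp_all [← Complex.coe_smul]

theorem isClosed_fixedSubmodule (J : E →SL[starRingEnd ℂ] E) :
    IsClosed (fixedSubmodule J : Set E) :=
  isClosed_eq J.continuous continuous_id

theorem exists_mem_fixedSubmodule_eq_add_I_smul {J : E →SL[starRingEnd ℂ] E}
    (hJinv : ∀ x, J (J x) = x) (x : E) :
    ∃ a ∈ fixedSubmodule J, ∃ b ∈ fixedSubmodule J, x = a + Complex.I • b := by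
  refine ⟨(2⁻¹ : ℂ) • (x + J x), ?_, (-Complex.I / 2) • (x - J x), ?_, ?_⟩
  · show J _ = _
    simp [hJinv, add_comm, map_ofNat]
  · show J _ = _
    simp [hJinv, map_div₀, map_ofNat]
    module
  · have hI : Complex.I * (-Complex.I / 2) = 2⁻¹ := by
      linear_combination (-1 / 2 : ℂ) * Complex.I_sq
    rw [smul_smul, hI]
    module

theorem orthonormal_of_fixed {J : E →SL[starRingEnd ℂ] E}
    (hJanti : ∀ x y, ⟪J x, J y⟫_ℂ = ⟪y, x⟫_ℂ) {ι : Type*} [DecidableEq ι] {v : ι → E}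
    (hv : ∀ i, J (v i) = v i)
    (hre : ∀ i j, (⟪v i, v j⟫_ℂ).re = if i = j then 1 else 0) : Orthonormal ℂ v := by
  refine orthonormal_iff_ite.2 fun i j => Complex.ext ?_ ?_
  · simpa [apply_ite Complex.re] using hre i j
  · have hreal : conj ⟪v i, v j⟫_ℂ = ⟪v i, v j⟫_ℂ := by
      rw [inner_conj_symm, ← hJanti, hv, hv]
    simpa [apply_ite Complex.im] using (Complex.conj_eq_iff_im.1 hreal)

theorem exists_hilbertBasis_forall_fixed [CompleteSpace E] (J : E →SL[starRingEnd ℂ] E)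
    (hJinv : ∀ x, J (J x) = x) (hJanti : ∀ x y, ⟪J x, J y⟫_ℂ = ⟪y, x⟫_ℂ) :
    ∃ (w : Type u) (b : HilbertBasis w ℂ E), ∀ i, J (b i) = b i := by
  classical
  let _ : InnerProductSpace ℝ E := .complexToReal
  have : CompleteSpace (fixedSubmodule J) := (isClosed_fixedSubmodule J).completeSpace_coe
  obtain ⟨w, b₀, -⟩ := exists_hilbertBasis ℝ (fixedSubmodule J)
  have hfix : ∀ i, J (b₀ i) = b₀ i := fun i => (b₀ i).2
  have hon : Orthonormal ℂ fun i => (b₀ i : E) :=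
    orthonormal_of_fixed hJanti hfix fun i j => orthonormal_iff_ite.1 b₀.orthonormal i j
  let S := Submodule.span ℂ (Set.range fun i => (b₀ i : E))
  have hfixed_mem : ∀ y ∈ fixedSubmodule J, y ∈ S.topologicalClosure := fun y hy =>
    b₀.apply_mem_of_forall_mem (fixedSubmodule J).subtypeL
      (V := S.topologicalClosure.restrictScalars ℝ) S.isClosed_topologicalClosure
      (fun i => S.le_topologicalClosure (Submodule.subset_span ⟨i, rfl⟩)) ⟨y, hy⟩
  refine ⟨w, HilbertBasis.mk hon fun x _ => ?_, fun i => by simpa using hfix i⟩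
  obtain ⟨a, ha, b, hb, rfl⟩ := exists_mem_fixedSubmodule_eq_add_I_smul hJinv x
  exact add_mem (hfixed_mem a ha) (Submodule.smul_mem _ _ (hfixed_mem b hb))

end FixedBasis

section HilbertSchmidt
open scoped ENNReal
variable {E : Type*} [NormedAddCommGroup E] [InnerProductSpace ℂ E] {ι κ : Type*}

theorem summable_iff_tsum_ofReal_ne_top {f : ι → ℝ} (hf : ∀ i, 0 ≤ f i) :
    Summable f ↔ ∑' i, ENNReal.ofReal (f i) ≠ ⊤ := by
  refine ⟨Summable.tsum_ofReal_ne_top, fun h => ?_⟩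
  simpa only [ENNReal.toReal_ofReal (hf _)] using ENNReal.summable_toReal h

theorem tsum_eq_toReal_tsum_ofReal {f : ι → ℝ} (hf : ∀ i, 0 ≤ f i) :
    ∑' i, f i = (∑' i, ENNReal.ofReal (f i)).toReal := by
  rw [ENNReal.tsum_toReal_eq fun _ => ENNReal.ofReal_ne_top]
  simp only [ENNReal.toReal_ofReal (hf _)]

/-- The squared Hilbert–Schmidt norm; it is `⊤` exactly when `T` is not Hilbert–Schmidt. -/
def hsNormSq (b : HilbertBasis ι ℂ E) (T : E →L[ℂ] E) : ℝ≥0∞ :=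
  ∑' i, ENNReal.ofReal (‖T (b i)‖ ^ 2)

def opMatrix (v : ι → E) (T : E →L[ℂ] E) (r : ι × ι) : ℂ := ⟪v r.1, T (v r.2)⟫_ℂ

theorem hsNormSq_eq_tsum_tsum (b : HilbertBasis ι ℂ E) (c : HilbertBasis κ ℂ E)
    (T : E →L[ℂ] E) :
    hsNormSq b T = ∑' i, ∑' j, ENNReal.ofReal (‖⟪c j, T (b i)⟫_ℂ‖ ^ 2) := by
  refine tsum_congr fun i => ?_
  rw [← ENNReal.ofReal_tsum_of_nonneg (fun _ => sq_nonneg _)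
    (c.hasSum_norm_inner_sq _).summable, (c.hasSum_norm_inner_sq _).tsum_eq]

theorem hsNormSq_adjoint [CompleteSpace E] (b : HilbertBasis ι ℂ E) (c : HilbertBasis κ ℂ E)
    (T : E →L[ℂ] E) :
    hsNormSq c (ContinuousLinearMap.adjoint T) = hsNormSq b T := by
  rw [hsNormSq_eq_tsum_tsum b c, hsNormSq_eq_tsum_tsum c b, ENNReal.tsum_comm]
  simp only [ContinuousLinearMap.adjoint_inner_right, norm_inner_symm]

theorem hsNormSq_basis_indep [CompleteSpace E] (b : HilbertBasis ι ℂ E) (c : HilbertBasis κ ℂ E)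
    (T : E →L[ℂ] E) :
    hsNormSq b T = hsNormSq c T := by
  rw [← hsNormSq_adjoint b c, ← hsNormSq_adjoint c c (ContinuousLinearMap.adjoint T),
    ContinuousLinearMap.adjoint_adjoint]

theorem hsNormSq_eq_tsum_opMatrix (b : HilbertBasis ι ℂ E) (T : E →L[ℂ] E) :
    hsNormSq b T = ∑' r, ENNReal.ofReal (‖opMatrix b T r‖ ^ 2) := by
  rw [hsNormSq_eq_tsum_tsum b b, ENNReal.tsum_comm, ENNReal.tsum_prod']
  rfl

theorem summable_iff_hsNormSq_ne_top (b : HilbertBasis ι ℂ E) (T : E →L[ℂ] E) :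
    Summable (fun i => ‖T (b i)‖ ^ 2) ↔ hsNormSq b T ≠ ⊤ :=
  summable_iff_tsum_ofReal_ne_top fun _ => sq_nonneg _

theorem tsum_norm_sq_eq_toReal_hsNormSq (b : HilbertBasis ι ℂ E) (T : E →L[ℂ] E) :
    ∑' i, ‖T (b i)‖ ^ 2 = (hsNormSq b T).toReal :=
  tsum_eq_toReal_tsum_ofReal fun _ => sq_nonneg _

theorem summable_iff_summable_opMatrix [CompleteSpace E] (b : HilbertBasis ι ℂ E)
    (c : HilbertBasis κ ℂ E) (T : E →L[ℂ] E) :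
    Summable (fun i => ‖T (b i)‖ ^ 2) ↔ Summable (fun r => ‖opMatrix c T r‖ ^ 2) := by
  rw [summable_iff_hsNormSq_ne_top, hsNormSq_basis_indep b c, hsNormSq_eq_tsum_opMatrix,
    summable_iff_tsum_ofReal_ne_top fun _ => sq_nonneg _]

theorem hsNormSq_eq_of_opMatrix_eq_comp (b : HilbertBasis ι ℂ E) {S T : E →L[ℂ] E}
    (σ : ι × ι ≃ ι × ι) (h : opMatrix b S = opMatrix b T ∘ σ) :
    hsNormSq b S = hsNormSq b T := by
  rw [hsNormSq_eq_tsum_opMatrix, hsNormSq_eq_tsum_opMatrix, h]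
  exact σ.tsum_eq fun r => ENNReal.ofReal (‖opMatrix b T r‖ ^ 2)

end HilbertSchmidt

section OpOfMatrix
open InnerProductSpace
variable {E : Type*} [NormedAddCommGroup E] [InnerProductSpace ℂ E] {ι : Type*}

theorem Orthonormal.sum_sq_norm_inner_mul_norm_inner_le {v : ι → E} (hv : Orthonormal ℂ v)
    (t : Finset (ι × ι)) (x y : E) :
    ∑ r ∈ t, (‖⟪v r.1, y⟫_ℂ‖ * ‖⟪v r.2, x⟫_ℂ‖) ^ 2 ≤ (‖y‖ * ‖x‖) ^ 2 := by
  classical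
  calc ∑ r ∈ t, (‖⟪v r.1, y⟫_ℂ‖ * ‖⟪v r.2, x⟫_ℂ‖) ^ 2
      ≤ ∑ r ∈ t.image Prod.fst ×ˢ t.image Prod.snd, (‖⟪v r.1, y⟫_ℂ‖ * ‖⟪v r.2, x⟫_ℂ‖) ^ 2 :=
        Finset.sum_le_sum_of_subset_of_nonneg Finset.subset_product fun _ _ _ => sq_nonneg _
    _ = (∑ p ∈ t.image Prod.fst, ‖⟪v p, y⟫_ℂ‖ ^ 2) *
          ∑ q ∈ t.image Prod.snd, ‖⟪v q, x⟫_ℂ‖ ^ 2 := by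
        simp only [Finset.sum_mul_sum, Finset.sum_product, mul_pow]
    _ ≤ ‖y‖ ^ 2 * ‖x‖ ^ 2 :=
        mul_le_mul (Orthonormal.sum_inner_products_le y hv)
          (Orthonormal.sum_inner_products_le x hv) (by positivity) (by positivity)
    _ = (‖y‖ * ‖x‖) ^ 2 := (mul_pow ..).symm

theorem norm_sum_smul_rankOne_le {v : ι → E} (hv : Orthonormal ℂ v) (M : ι × ι → ℂ)
    (t : Finset (ι × ι)) :
    ‖∑ r ∈ t, M r • rankOne ℂ (v r.1) (v r.2)‖ ≤ √(∑ r ∈ t, ‖M r‖ ^ 2) := by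
  set A := ∑ r ∈ t, M r • rankOne ℂ (v r.1) (v r.2)
  set S := √(∑ r ∈ t, ‖M r‖ ^ 2)
  -- Bound `⟪y, A x⟫` by Cauchy–Schwarz and Bessel, then take `y = A x`.
  have hinner : ∀ x y, ‖⟪y, A x⟫_ℂ‖ ≤ S * (‖y‖ * ‖x‖) := fun x y =>
    calc ‖⟪y, A x⟫_ℂ‖ = ‖∑ r ∈ t, M r * (⟪y, v r.1⟫_ℂ * ⟪v r.2, x⟫_ℂ)‖ := by
          simp only [A, sum_apply, smul_apply, rankOne_apply, inner_sum, inner_smul_right,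
            mul_comm]
      _ ≤ ∑ r ∈ t, ‖M r‖ * (‖⟪v r.1, y⟫_ℂ‖ * ‖⟪v r.2, x⟫_ℂ‖) :=
          (norm_sum_le _ _).trans_eq (by simp only [norm_mul, norm_inner_symm])
      _ ≤ S * √(∑ r ∈ t, (‖⟪v r.1, y⟫_ℂ‖ * ‖⟪v r.2, x⟫_ℂ‖) ^ 2) :=
          Real.sum_mul_le_sqrt_mul_sqrt _ _ _
      _ ≤ S * (‖y‖ * ‖x‖) := by
          gcongr
          exact (Real.sqrt_le_left (by positivity)).2
            (hv.sum_sq_norm_inner_mul_norm_inner_le t x y)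
  refine ContinuousLinearMap.opNorm_le_bound _ (Real.sqrt_nonneg _) fun x => ?_
  have h := hinner x (A x)
  rw [inner_self_eq_norm_sq_to_K] at h
  simp only [norm_pow, RCLike.norm_ofReal, abs_norm] at h
  rcases (norm_nonneg (A x)).eq_or_lt with h0 | hpos
  · rw [← h0]
    positivity
  · rw [sq, mul_left_comm] at h
    exact le_of_mul_le_mul_left h hpos

theorem summable_smul_rankOne [CompleteSpace E] {v : ι → E} (hv : Orthonormal ℂ v)
    {M : ι × ι → ℂ} (hM : Summable fun r => ‖M r‖ ^ 2) :
    Summable fun r : ι × ι => M r • rankOne ℂ (v r.1) (v r.2) := by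
  refine summable_iff_vanishing_norm.2 fun ε hε => ?_
  obtain ⟨s, hs⟩ := summable_iff_vanishing_norm.1 hM (ε ^ 2) (by positivity)
  refine ⟨s, fun t ht => (norm_sum_smul_rankOne_le hv M t).trans_lt ?_⟩
  have htail := hs t ht
  rw [Real.norm_of_nonneg (Finset.sum_nonneg fun _ _ => sq_nonneg _)] at htail
  exact (Real.sqrt_lt' hε).2 htail

def opOfMatrix (v : ι → E) (M : ι × ι → ℂ) : E →L[ℂ] E :=
  ∑' r, M r • rankOne ℂ (v r.1) (v r.2)

theorem opMatrix_opOfMatrix [CompleteSpace E] {v : ι → E} (hv : Orthonormal ℂ v)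
    {M : ι × ι → ℂ} (hM : Summable fun r => ‖M r‖ ^ 2) : opMatrix v (opOfMatrix v M) = M := by
  classical
  funext ⟨p, q⟩
  let L : (E →L[ℂ] E) →L[ℂ] ℂ := (innerSL ℂ (v p)).comp (ContinuousLinearMap.apply ℂ E (v q))
  change L (opOfMatrix v M) = M (p, q)
  rw [opOfMatrix, L.map_tsum (summable_smul_rankOne hv hM), tsum_eq_single (p, q)]
  · simp [L, hv.1]
  · rintro ⟨i, j⟩ hij
    simp only [L, ContinuousLinearMap.coe_comp, Function.comp_apply,
      ContinuousLinearMap.apply_apply, smul_apply, rankOne_apply, innerSL_apply_apply,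
      inner_smul_right]
    obtain rfl | hj := eq_or_ne j q
    · rw [hv.2 fun hpi : p = i => hij (by rw [hpi]), mul_zero, mul_zero]
    · rw [hv.2 hj, zero_mul, mul_zero]

end OpOfMatrix

namespace TensorSquare
variable [NormedAddCommGroup H] [InnerProductSpace ℂ H] [NormedAddCommGroup K]
  [InnerProductSpace ℂ K] (τ : TensorSquare H K)

attribute [simp] tmul_add_left tmul_add_right tmul_smul_left tmul_smul_right

theorem norm_tmul (a b : H) : ‖τ.tmul a b‖ = ‖a‖ * ‖b‖ := by
  have h := τ.inner_tmul a b a b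
  simp only [inner_self_eq_norm_sq_to_K] at h
  have hsq : ‖τ.tmul a b‖ ^ 2 = (‖a‖ * ‖b‖) ^ 2 := by
    rw [mul_pow]
    exact_mod_cast h
  exact (pow_left_inj₀ (norm_nonneg _) (by positivity) two_ne_zero).1 hsq

def tmulCLM : H →L[ℂ] H →L[ℂ] K :=
  LinearMap.mkContinuous₂
    (LinearMap.mk₂ ℂ τ.tmul τ.tmul_add_left τ.tmul_smul_left τ.tmul_add_right
      τ.tmul_smul_right) 1
    (fun a b => by simp [τ.norm_tmul])

@[simp] theorem tmulCLM_apply (a b : H) : τ.tmulCLM a b = τ.tmul a b := rfl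

@[fun_prop] theorem continuous_tmul {X : Type*} [TopologicalSpace X] {f g : X → H}
    (hf : Continuous f) (hg : Continuous g) : Continuous fun x => τ.tmul (f x) (g x) := by
  simp only [← tmulCLM_apply]
  fun_prop

theorem orthonormal_tmul {w : Type*} {v : w → H} (hv : Orthonormal ℂ v) :
    Orthonormal ℂ fun p : w × w => τ.tmul (v p.1) (v p.2) := by
  classical
  rw [orthonormal_iff_ite]
  rintro ⟨i, j⟩ ⟨k, l⟩
  simp only [τ.inner_tmul, orthonormal_iff_ite.1 hv, Prod.mk.injEq, ite_and]
  split_ifs <;> simp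

theorem span_tmul_hilbertBasis_dense {w : Type*} (b : HilbertBasis w ℂ H) :
    ⊤ ≤ (Submodule.span ℂ
      (Set.range fun p : w × w => τ.tmul (b p.1) (b p.2))).topologicalClosure := by
  set V := (Submodule.span ℂ
      (Set.range fun p : w × w => τ.tmul (b p.1) (b p.2))).topologicalClosure
  have hV : IsClosed (V : Set K) := Submodule.isClosed_topologicalClosure _
  have hbasis_left : ∀ i y, τ.tmul (b i) y ∈ V := fun i =>
    b.apply_mem_of_forall_mem (τ.tmulCLM (b i)) hV
      fun j => Submodule.le_topologicalClosure _ (Submodule.subset_span ⟨(i, j), rfl⟩)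
  have hall : ∀ x y, τ.tmul x y ∈ V := fun x y =>
    b.apply_mem_of_forall_mem (τ.tmulCLM.flip y) hV (fun i => hbasis_left i y) x
  have hspan : (Submodule.span ℂ (Set.range fun p : H × H => τ.tmul p.1 p.2) : Set K) ⊆ V :=
    Submodule.span_le.2 (Set.range_subset_iff.2 fun p => hall p.1 p.2)
  exact fun x _ => closure_minimal hspan hV (τ.dense_span x)

def pairBasis [CompleteSpace K] {w : Type*} (b : HilbertBasis w ℂ H) : HilbertBasis (w × w) ℂ K :=
  HilbertBasis.mk (τ.orthonormal_tmul b.orthonormal) (τ.span_tmul_hilbertBasis_dense b)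

@[simp] theorem pairBasis_apply [CompleteSpace K] {w : Type*} (b : HilbertBasis w ℂ H) (p : w × w) :
    τ.pairBasis b p = τ.tmul (b p.1) (b p.2) := by
  rw [pairBasis, HilbertBasis.coe_mk]

end TensorSquare

section Crossing
variable [NormedAddCommGroup H] [InnerProductSpace ℂ H] [NormedAddCommGroup K]
  [InnerProductSpace ℂ K] (τ : TensorSquare H K) (J : H →SL[starRingEnd ℂ] H) {w : Type*}

theorem crossRelB_of_hilbertBasis (b : HilbertBasis w ℂ H) {T Tc : K →L[ℂ] K}
    (h : ∀ i j k l, ⟪τ.tmul (b i) (b j), Tc (τ.tmul (b k) (b l))⟫_ℂ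
      = ⟪τ.tmul (b j) (J (b l)), T (τ.tmul (J (b i)) (b k))⟫_ℂ) :
    CrossRelB τ J J T Tc := by
  -- Extend in `ψ₂`, `ψ₁`, `φ₂`, `φ₁` in turn: both sides are continuous and (conjugate-)linear in
  -- each variable.
  have h₄ : ∀ i j k ψ₂, ⟪τ.tmul (b i) (b j), Tc (τ.tmul (b k) ψ₂)⟫_ℂ
      = ⟪τ.tmul (b j) (J ψ₂), T (τ.tmul (J (b i)) (b k))⟫_ℂ := fun i j k =>
    b.eq_of_semilinear (σ := RingHom.id ℂ)
      (f := fun ψ₂ => ⟪τ.tmul (b i) (b j), Tc (τ.tmul (b k) ψ₂)⟫_ℂ)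
      (g := fun ψ₂ => ⟪τ.tmul (b j) (J ψ₂), T (τ.tmul (J (b i)) (b k))⟫_ℂ)
      (by fun_prop) (by fun_prop) (by simp) (by simp)
      (by simp) (by simp [mul_comm]) (h i j k)
  have h₃ : ∀ i j ψ₁ ψ₂, ⟪τ.tmul (b i) (b j), Tc (τ.tmul ψ₁ ψ₂)⟫_ℂ
      = ⟪τ.tmul (b j) (J ψ₂), T (τ.tmul (J (b i)) ψ₁)⟫_ℂ := fun i j ψ₁ ψ₂ =>
    b.eq_of_semilinear (σ := RingHom.id ℂ)
      (f := fun ψ₁ => ⟪τ.tmul (b i) (b j), Tc (τ.tmul ψ₁ ψ₂)⟫_ℂ)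
      (g := fun ψ₁ => ⟪τ.tmul (b j) (J ψ₂), T (τ.tmul (J (b i)) ψ₁)⟫_ℂ)
      (by fun_prop) (by fun_prop) (by simp) (by simp)
      (by simp) (by simp) (fun k => h₄ i j k ψ₂) ψ₁
  have h₂ : ∀ i φ₂ ψ₁ ψ₂, ⟪τ.tmul (b i) φ₂, Tc (τ.tmul ψ₁ ψ₂)⟫_ℂ
      = ⟪τ.tmul φ₂ (J ψ₂), T (τ.tmul (J (b i)) ψ₁)⟫_ℂ := fun i φ₂ ψ₁ ψ₂ =>
    b.eq_of_semilinear (σ := starRingEnd ℂ)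
      (f := fun φ₂ => ⟪τ.tmul (b i) φ₂, Tc (τ.tmul ψ₁ ψ₂)⟫_ℂ)
      (g := fun φ₂ => ⟪τ.tmul φ₂ (J ψ₂), T (τ.tmul (J (b i)) ψ₁)⟫_ℂ)
      (by fun_prop) (by fun_prop) (by simp) (by simp)
      (by simp [mul_comm]) (by simp [mul_comm]) (fun j => h₃ i j ψ₁ ψ₂) φ₂
  intro φ₁ φ₂ ψ₁ ψ₂
  exact b.eq_of_semilinear (σ := starRingEnd ℂ)
    (f := fun φ₁ => ⟪τ.tmul φ₁ φ₂, Tc (τ.tmul ψ₁ ψ₂)⟫_ℂ)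
    (g := fun φ₁ => ⟪τ.tmul φ₂ (J ψ₂), T (τ.tmul (J φ₁) ψ₁)⟫_ℂ)
    (by fun_prop) (by fun_prop) (by simp) (by simp)
    (by simp [mul_comm]) (by simp [mul_comm]) (fun i => h₂ i φ₂ ψ₁ ψ₂) φ₁

def crossEquiv (w : Type*) : (w × w) × (w × w) ≃ (w × w) × (w × w) :=
  (Equiv.prodProdProdComm w w w w).trans (Equiv.prodComm _ _)

@[simp] theorem crossEquiv_apply (i j k l : w) :
    crossEquiv w ((i, j), (k, l)) = ((j, l), (i, k)) := rfl

theorem crossRelB_iff_opMatrix_eq_comp [CompleteSpace K] (b : HilbertBasis w ℂ H)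
    (hb : ∀ i, J (b i) = b i) {T Tc : K →L[ℂ] K} :
    CrossRelB τ J J T Tc ↔
      opMatrix (τ.pairBasis b) Tc = opMatrix (τ.pairBasis b) T ∘ crossEquiv w := by
  refine ⟨fun h => funext fun ⟨⟨i, j⟩, ⟨k, l⟩⟩ => ?_, fun h => ?_⟩
  · simpa [opMatrix, hb] using h (b i) (b j) (b k) (b l)
  · refine crossRelB_of_hilbertBasis τ J b fun i j k l => ?_
    simpa [opMatrix, hb] using congrFun h ((i, j), (k, l))

end Crossing

/-- For an antiunitary involution `J` on a separable Hilbert space, every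
Hilbert–Schmidt operator on `H ⊗ H` is `J`-crossable, and `Cross_J` restricts to a bijective
isometry (a unitary) of the Hilbert–Schmidt class: `‖Cross_J(T)‖₂ = ‖T‖₂`. The
Hilbert–Schmidt property and norm are expressed via a Hilbert basis `bK` of `H ⊗ H`. -/
theorem crossing_unitary_on_hilbert_schmidt
    [NormedAddCommGroup H] [InnerProductSpace ℂ H] [CompleteSpace H]
    [NormedAddCommGroup K] [InnerProductSpace ℂ K] [CompleteSpace K]
    (τ : TensorSquare H K)
    (J : H →SL[starRingEnd ℂ] H)
    (hJinv : ∀ x : H, J (J x) = x)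
    (hJanti : ∀ x y : H, ⟪J x, J y⟫_ℂ = ⟪y, x⟫_ℂ)
    {ι : Type*} (bK : HilbertBasis ι ℂ K) :
    -- every Hilbert–Schmidt operator is J-crossable
    (∀ T : K →L[ℂ] K, Summable (fun i => ‖T (bK i)‖ ^ 2) →
      ∃ Tc : K →L[ℂ] K, CrossRelB τ J J T Tc) ∧
    -- Cross_J is isometric in Hilbert–Schmidt norm
    (∀ T Tc : K →L[ℂ] K, Summable (fun i => ‖T (bK i)‖ ^ 2) → CrossRelB τ J J T Tc →
      Summable (fun i => ‖Tc (bK i)‖ ^ 2) ∧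
      Real.sqrt (∑' i, ‖Tc (bK i)‖ ^ 2) = Real.sqrt (∑' i, ‖T (bK i)‖ ^ 2)) ∧
    -- Cross_J is a bijection of the Hilbert–Schmidt class (surjectivity; injectivity is
    -- automatic from the isometry and linearity of the crossing map)
    (∀ C : K →L[ℂ] K, Summable (fun i => ‖C (bK i)‖ ^ 2) →
      ∃ T : K →L[ℂ] K, Summable (fun i => ‖T (bK i)‖ ^ 2) ∧ CrossRelB τ J J T C) := by
  obtain ⟨w, bH, hfix⟩ := exists_hilbertBasis_forall_fixed J hJinv hJanti
  set e := τ.pairBasis bH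
  have hHS (S : K →L[ℂ] K) := summable_iff_summable_opMatrix bK e S
  have hcross (T Tc : K →L[ℂ] K) := crossRelB_iff_opMatrix_eq_comp τ J bH hfix (T := T) (Tc := Tc)
  refine ⟨fun T hT => ?_, fun T Tc hT hTc => ?_, fun C hC => ?_⟩
  · refine ⟨opOfMatrix e (opMatrix e T ∘ crossEquiv w), (hcross _ _).2 ?_⟩
    exact opMatrix_opOfMatrix e.orthonormal ((crossEquiv w).summable_iff.2 ((hHS T).1 hT))
  · have hnorm : hsNormSq bK Tc = hsNormSq bK T := by
      rw [hsNormSq_basis_indep bK e, hsNormSq_basis_indep bK e T]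
      exact hsNormSq_eq_of_opMatrix_eq_comp e (crossEquiv w) ((hcross T Tc).1 hTc)
    refine ⟨?_, by rw [tsum_norm_sq_eq_toReal_hsNormSq, tsum_norm_sq_eq_toReal_hsNormSq, hnorm]⟩
    rw [summable_iff_hsNormSq_ne_top, hnorm, ← summable_iff_hsNormSq_ne_top]
    exact hT
  · have hM : Summable fun r => ‖(opMatrix e C ∘ (crossEquiv w).symm) r‖ ^ 2 :=
      (crossEquiv w).symm.summable_iff (f := fun r => ‖opMatrix e C r‖ ^ 2) |>.2 ((hHS C).1 hC)
    refine ⟨opOfMatrix e (opMatrix e C ∘ (crossEquiv w).symm), (hHS _).2 ?_, (hcross _ _).2 ?_⟩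
    · rwa [opMatrix_opOfMatrix e.orthonormal hM]
    · rw [opMatrix_opOfMatrix e.orthonormal hM, Function.comp_assoc, Equiv.symm_comp_self,
        Function.comp_id]
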